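/- For every n ≥ 4, the number of occurrences of the pattern [112-21) in C_n equals 2^{n-2} - 2; that is, the number of positions j ≥ 4 with C_n(j)C_n(j+1) = 21, given that C_n begins with 112, counted as occurrences of 21 that do not overlap the initial block 112, equals 2^{n-2} - 2. -/

import Mathlib

/-- The pair `(C_n, D_n)` of sigma-words, with `C_0 = D_0 = []`,
`C_{k+1} = C_k · 1 · D_k`, `D_{k+1} = C_k · 2 · D_k`
(so `C_1 = [1]`, `D_1 = [2]`). -/
def sigmaCD : ℕ → List ℕ × List ℕ
  | 0 => ([], [])
  | k + 1 => ((sigmaCD k).1 ++ 1 :: (sigmaCD k).2, (sigmaCD k).1 ++ 2 :: (sigmaCD k).2)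

/-- The sigma-word `C_n`. -/
def sigmaC (n : ℕ) : List ℕ := (sigmaCD n).1

/-- The sigma-word `D_n`. -/
def sigmaD (n : ℕ) : List ℕ := (sigmaCD n).2

/-- Number of occurrences of `p` as a (not necessarily contiguous) subsequence of `w`,
counted with multiplicity of position sets. -/
def subseqCount (p w : List ℕ) : ℕ := (w.sublistsLen p.length).count p

/-- Number of occurrences of `p` as a factor (contiguous subword) of `w`,
i.e. the number of starting positions at which `p` occurs in `w`. -/
def factorCount (p w : List ℕ) : ℕ :=
  (List.range w.length).countP fun i => decide ((w.drop i).take p.length = p)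

/-- Number of occurrences of the generalized pattern `[112-21)` in `w`
(positions 1-indexed in the paper, 0-indexed here): the word must begin with the
factor `112`, and one counts positions `j ≥ 3` with `w(j)w(j+1) = 21`. -/
def countL112_21 (w : List ℕ) : ℕ :=
  if w.take 3 = [1, 1, 2] then
    (List.range w.length).countP fun j =>
      decide (3 ≤ j ∧ w.getD j 0 = 2 ∧ w.getD (j + 1) 0 = 1 ∧ j + 1 < w.length)
  else 0

/-!
Both `C_n` and `D_n` (for `n ≥ 2`) begin with `1` and end with `2`, so in
`C_{n+1} = C_n · 1 · D_n` and `D_{n+1} = C_n · 2 · D_n` exactly one new factor `21` appears at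
the seams. Hence `C_n` and `D_n` contain the same number `a_n` of factors `21`, with `a_2 = 0`
and `a_{n+1} = 2 a_n + 1`, i.e. `a_n = 2^{n-2} - 1`. For `n ≥ 3`, `C_n` begins with `1121`, and
the factor `21` formed by its third and fourth letters is the only one overlapping the prefix
`112`.
-/

section PairCount

variable {α : Type*}

lemma countP_range_length_cons (a : α) (w : List α) (p : ℕ → Bool) :
    (List.range (a :: w).length).countP p =
      (List.range w.length).countP (fun j => p (j + 1)) + if p 0 then 1 else 0 := by
  rw [List.length_cons, List.range_succ_eq_map, List.countP_cons, List.countP_map]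
  rfl

variable [DecidableEq α] (x y : α)

def pairCount : List α → ℕ
  | [] => 0
  | [_] => 0
  | a :: b :: t => (if a = x ∧ b = y then 1 else 0) + pairCount (b :: t)

lemma pairCount_cons (a : α) (w : List α) :
    pairCount x y (a :: w) = (if a = x ∧ w.head? = some y then 1 else 0) + pairCount x y w := by
  cases w <;> simp [pairCount]

lemma pairCount_append (u v : List α) :
    pairCount x y (u ++ v) = pairCount x y u + pairCount x y v +
      if u.getLast? = some x ∧ v.head? = some y then 1 else 0 := by
  induction u with
  | nil => simp [pairCount]
  | cons a u ih =>
    cases u with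
    | nil => simp [pairCount_cons, pairCount, add_comm]
    | cons b u =>
      rw [List.cons_append, pairCount_cons, ih, pairCount_cons x y a, List.cons_append,
        List.head?_cons, List.head?_cons, List.getLast?_cons_cons]
      omega

lemma countP_range_eq_pairCount (d : α) (w : List α) :
    (List.range w.length).countP
        (fun j => decide (w.getD j d = x ∧ w.getD (j + 1) d = y ∧ j + 1 < w.length)) =
      pairCount x y w := by
  induction w with
  | nil => rfl
  | cons a w ih =>
    rw [countP_range_length_cons, pairCount_cons, add_comm, ← ih]
    congr 1
    · cases w <;> simp
    · apply List.countP_congr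
      intro j _
      simp

end PairCount

lemma sigmaC_succ (n : ℕ) : sigmaC (n + 1) = sigmaC n ++ 1 :: sigmaD n := rfl

lemma sigmaD_succ (n : ℕ) : sigmaD (n + 1) = sigmaC n ++ 2 :: sigmaD n := rfl

lemma head?_sigmaC (n : ℕ) : (sigmaC (n + 1)).head? = some 1 := by
  induction n with
  | zero => rfl
  | succ n ih => rw [sigmaC_succ, List.head?_append, ih]; rfl

lemma getLast?_sigmaD (n : ℕ) : (sigmaD (n + 1)).getLast? = some 2 := by
  induction n with
  | zero => rfl
  | succ n ih => rw [sigmaD_succ, List.getLast?_append, List.getLast?_cons, ih]; rfl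

lemma head?_sigmaD (n : ℕ) : (sigmaD (n + 2)).head? = some 1 := by
  rw [sigmaD_succ, List.head?_append, head?_sigmaC]; rfl

lemma getLast?_sigmaC (n : ℕ) : (sigmaC (n + 2)).getLast? = some 2 := by
  rw [sigmaC_succ, List.getLast?_append, List.getLast?_cons, getLast?_sigmaD]; rfl

lemma pairCount_sigmaC_succ (n : ℕ) :
    pairCount 2 1 (sigmaC (n + 3)) =
      pairCount 2 1 (sigmaC (n + 2)) + pairCount 2 1 (sigmaD (n + 2)) + 1 := by
  rw [sigmaC_succ, pairCount_append, pairCount_cons, getLast?_sigmaC]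
  simp

lemma pairCount_sigmaD_succ (n : ℕ) :
    pairCount 2 1 (sigmaD (n + 3)) =
      pairCount 2 1 (sigmaC (n + 2)) + pairCount 2 1 (sigmaD (n + 2)) + 1 := by
  rw [sigmaD_succ, pairCount_append, pairCount_cons, head?_sigmaD]
  simp only [and_self, ↓reduceIte, List.head?_cons, Option.some.injEq, OfNat.ofNat_ne_one,
    and_false, add_zero]
  omega

lemma pairCount_sigmaD_eq_sigmaC (n : ℕ) :
    pairCount 2 1 (sigmaD (n + 2)) = pairCount 2 1 (sigmaC (n + 2)) := by
  cases n with
  | zero => rfl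
  | succ n => rw [pairCount_sigmaC_succ, pairCount_sigmaD_succ]

lemma pairCount_sigmaC_add_one (n : ℕ) : pairCount 2 1 (sigmaC (n + 2)) + 1 = 2 ^ n := by
  induction n with
  | zero => rfl
  | succ n ih => rw [pairCount_sigmaC_succ, pairCount_sigmaD_eq_sigmaC, pow_succ]; omega

lemma sigmaC_eq_cons (n : ℕ) : ∃ s, sigmaC (n + 3) = 1 :: 1 :: 2 :: 1 :: s := by
  induction n with
  | zero => exact ⟨[1, 2, 2], rfl⟩
  | succ n ih =>
    obtain ⟨s, hs⟩ := ih
    exact ⟨s ++ 1 :: sigmaD (n + 3), by rw [sigmaC_succ, hs]; rfl⟩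

lemma countL112_21_cons (r : List ℕ) : countL112_21 (1 :: 1 :: 2 :: r) = pairCount 2 1 r := by
  rw [countL112_21, if_pos (show (1 :: 1 :: 2 :: r).take 3 = [1, 1, 2] from rfl),
    countP_range_length_cons, countP_range_length_cons, countP_range_length_cons,
    ← countP_range_eq_pairCount 2 1 0]
  simp

theorem pattern_bracket_112_21 (n : ℕ) (hn : 4 ≤ n) :
    countL112_21 (sigmaC n) = 2 ^ (n - 2) - 2 := by
  obtain ⟨m, rfl⟩ : ∃ m, n = m + 3 := ⟨n - 3, by omega⟩
  obtain ⟨s, hs⟩ := sigmaC_eq_cons m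
  have hcount := pairCount_sigmaC_add_one (m + 1)
  have hprefix : pairCount 2 1 (1 :: 1 :: 2 :: 1 :: s) = pairCount 2 1 (1 :: s) + 1 := by
    simp [pairCount, add_comm]
  rw [hs, hprefix] at hcount
  rw [hs, countL112_21_cons, show m + 3 - 2 = m + 1 by omega]
  omega
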